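/- Let α be a nonzero algebraic integer in a cyclotomic field which is a d-number of degree d = [ℚ(α):ℚ], with norm N(α) = ± Π_j p_j^{k_j} (prime factorization). Then the following are equivalent: (a) 0 ≤ k_j < d for every prime p_j, and (b) no rational integer m ≥ 2 divides α in the ring of algebraic integers. -/

import Mathlib

/-!
If `α / m` is an algebraic integer then `N(α) = m^d N(α / m)`, so `m^d ∣ N(α)`. Conversely, for a
d-number every quotient `α / β` by a conjugate `β = σ α` is the algebraic integer
`σ (σ⁻¹ α / α)`, and the product of these quotients is `α^d / N(α)`. So if `m^d ∣ N(α)`, then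
`(α / m)^d = (α^d / N(α)) · (N(α) / m^d)` is integral, hence so is `α / m`. Thus `α` is divisible
by some `m ≥ 2` iff `p^d ∣ N(α)` for some prime `p`.
-/

open IntermediateField Polynomial

theorem IsAlgClosed.exists_ringEquiv_extend {A L : Type*} [Field A] [Field L] [IsAlgClosed L]
    [Algebra A L] (g : A ≃+* A) :
    ∃ σ : L ≃+* L, ∀ x, σ (algebraMap A L x) = algebraMap A L (g x) := by
  obtain ⟨ι, v, hv⟩ := exists_isTranscendenceBasis' A L
  let B := Algebra.adjoin A (Set.range v)
  have : IsAlgClosure B L := IsAlgClosed.isAlgClosure_of_transcendence_basis v hv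
  let e : MvPolynomial ι A ≃ₐ[A] B := hv.1.aevalEquiv
  let gB : B ≃+* B := (e.symm.toRingEquiv.trans (MvPolynomial.mapEquiv ι g)).trans e.toRingEquiv
  have hgB (x : A) : gB (algebraMap A B x) = algebraMap A B (g x) := by
    change e (MvPolynomial.map g (e.symm (algebraMap A B x))) = _
    rw [e.symm.commutes, MvPolynomial.algebraMap_eq, MvPolynomial.map_C,
      ← MvPolynomial.algebraMap_eq, e.commutes]
    rfl
  -- `L` is an algebraic closure of the polynomial ring `B`, on whose coefficients `g` acts.
  refine ⟨IsAlgClosure.equivOfEquiv L L gB, fun x => ?_⟩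
  rw [IsScalarTower.algebraMap_apply A B L, IsAlgClosure.equivOfEquiv_algebraMap, hgB,
    ← IsScalarTower.algebraMap_apply]

theorem IsAlgClosed.exists_algEquiv_apply_eq_of_aeval_minpoly {K L : Type*} [Field K] [Field L]
    [IsAlgClosed L] [Algebra K L] {x y : L} (hx : IsIntegral K x)
    (hy : aeval y (minpoly K x) = 0) : ∃ σ : L ≃ₐ[K] L, σ x = y := by
  let A := algebraicClosure K L
  have : IsAlgClosure K A := algebraicClosure.isAlgClosure K L
  have : Normal K A := IsAlgClosure.normal K A
  let x' : A := ⟨x, mem_algebraicClosure_iff.2 hx.isAlgebraic⟩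
  let y' : A := ⟨y, mem_algebraicClosure_iff.2 ⟨_, minpoly.ne_zero hx, hy⟩⟩
  have hy' : aeval y' (minpoly K x') = 0 := by
    refine (algebraMap A L).injective ?_
    rw [← aeval_algebraMap_apply, map_zero, ← minpoly.algebraMap_eq (algebraMap A L).injective]
    exact hy
  obtain ⟨g, hg⟩ := minpoly.exists_algEquiv_of_root' (Algebra.IsAlgebraic.isAlgebraic x') hy'
  obtain ⟨σ, hσ⟩ := exists_ringEquiv_extend (L := L) g.toRingEquiv
  refine ⟨AlgEquiv.ofRingEquiv (f := σ) fun k => ?_, ?_⟩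
  · rw [IsScalarTower.algebraMap_apply K A L, hσ]
    simp
  · simpa [hg] using hσ x'

theorem prod_aroots_minpoly {K L : Type*} [Field K] [Field L] [IsAlgClosed L] [Algebra K L]
    {x : L} (hx : IsIntegral K x) :
    ((minpoly K x).aroots L).prod =
      algebraMap K L ((-1) ^ (minpoly K x).natDegree * (minpoly K x).coeff 0) := by
  rw [map_mul, map_pow, map_neg, map_one, ← coeff_map,
    (IsAlgClosed.splits _).coeff_zero_eq_prod_roots_of_monic ((minpoly.monic hx).map _),
    natDegree_map, ← mul_assoc, ← mul_pow]
  simp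

theorem isIntegral_pow_natDegree_div_of_isIntegral_conj_div {K L : Type*} [Field K] [Field L]
    [IsAlgClosed L] [Algebra K L] {α : L} (hα : IsIntegral K α)
    (hconj : ∀ σ : L ≃ₐ[K] L, IsIntegral ℤ (σ α / α)) :
    IsIntegral ℤ (α ^ (minpoly K α).natDegree /
      algebraMap K L ((-1) ^ (minpoly K α).natDegree * (minpoly K α).coeff 0)) := by
  set R := (minpoly K α).aroots L
  have hprod : (R.map (α / ·)).prod = α ^ Multiset.card R / R.prod := by
    rw [Multiset.prod_map_div, Multiset.map_const', Multiset.prod_replicate, Multiset.map_id']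
  rw [← prod_aroots_minpoly hα, ← IsAlgClosed.card_aroots_eq_natDegree (B := L), ← hprod]
  refine IsIntegral.multiset_prod fun z hz => ?_
  obtain ⟨β, hβ, rfl⟩ := Multiset.mem_map.1 hz
  obtain ⟨σ, rfl⟩ := IsAlgClosed.exists_algEquiv_apply_eq_of_aeval_minpoly hα (mem_aroots.1 hβ).2
  have h : α / σ α = σ (σ.symm α / α) := by rw [map_div₀, AlgEquiv.apply_symm_apply]
  rw [h]
  exact (hconj σ.symm).map σ.toRingEquiv.toRingHom.toIntAlgHom

theorem IsIntegrallyClosed.coeff_zero_minpoly_smul {R S : Type*} [CommRing R] [IsDomain R]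
    [IsIntegrallyClosed R] [CommRing S] [IsDomain S] [Algebra R S] [Module.IsTorsionFree R S]
    {r : R} (hr : r ≠ 0) {s : S} (hs : IsIntegral R s) :
    (minpoly R (r • s)).coeff 0 = r ^ (minpoly R s).natDegree * (minpoly R s).coeff 0 := by
  rw [IsIntegrallyClosed.minpoly_smul hr hs, coeff_scaleRoots, Nat.sub_zero, mul_comm]

theorem Int.forall_factorization_lt_iff_forall_not_pow_dvd {N : ℤ} (hN : N ≠ 0) (d : ℕ) :
    (∀ p : ℕ, p.Prime → N.natAbs.factorization p < d) ↔ ∀ m : ℤ, 2 ≤ m → ¬ m ^ d ∣ N := by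
  have key {p : ℕ} (hp : p.Prime) : N.natAbs.factorization p < d ↔ ¬ (p : ℤ) ^ d ∣ N := by
    rw [← Nat.cast_pow, Int.natCast_dvd, hp.pow_dvd_iff_le_factorization (Int.natAbs_ne_zero.2 hN),
      not_le]
  refine ⟨fun h m hm hdvd => ?_, fun h p hp => (key hp).2 (h p (mod_cast hp.two_le))⟩
  have hp : m.natAbs.minFac.Prime := Nat.minFac_prime (by omega)
  refine (key hp).1 (h _ hp) ((pow_dvd_pow_of_dvd ?_ d).trans hdvd)
  exact Int.natCast_dvd.2 (Nat.minFac_dvd _)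

theorem neg_one_pow_mul_coeff_zero_minpoly_ne_zero {K L : Type*} [Field K] [Ring L] [IsDomain L]
    [Algebra K L] {x : L} (hx : IsIntegral K x) (hx0 : x ≠ 0) :
    (-1) ^ (minpoly K x).natDegree * (minpoly K x).coeff 0 ≠ 0 :=
  mul_ne_zero (pow_ne_zero _ (neg_ne_zero.2 one_ne_zero)) (minpoly.coeff_zero_ne_zero hx hx0)

section Rat

variable {L : Type*} [Field L] [Algebra ℚ L] {α : L}

theorem eq_neg_one_pow_mul_coeff_zero_minpoly_int (hα : IsIntegral ℤ α) {N : ℤ}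
    (hN : (N : ℚ) = (-1) ^ (minpoly ℚ α).natDegree * (minpoly ℚ α).coeff 0) :
    N = (-1) ^ (minpoly ℤ α).natDegree * (minpoly ℤ α).coeff 0 := by
  rw [minpoly.isIntegrallyClosed_eq_field_fractions' ℚ hα, (minpoly.monic hα).natDegree_map,
    coeff_map, algebraMap_int_eq, eq_intCast] at hN
  exact_mod_cast hN

theorem isIntegral_div_intCast_iff_pow_natDegree_dvd [IsAlgClosed L] (hα : IsIntegral ℤ α)
    (hconj : ∀ σ : L ≃ₐ[ℚ] L, IsIntegral ℤ (σ α / α)) {N : ℤ}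
    (hN : (N : ℚ) = (-1) ^ (minpoly ℚ α).natDegree * (minpoly ℚ α).coeff 0) {m : ℤ}
    (hm : m ≠ 0) : IsIntegral ℤ (α / m) ↔ m ^ (minpoly ℚ α).natDegree ∣ N := by
  have : CharZero L := charZero_of_injective_algebraMap (algebraMap ℚ L).injective
  have hmL : (m : L) ≠ 0 := Int.cast_ne_zero.2 hm
  have hαQ : IsIntegral ℚ α := hα.tower_top
  have hdeg : (minpoly ℚ α).natDegree = (minpoly ℤ α).natDegree := by
    rw [minpoly.isIntegrallyClosed_eq_field_fractions' ℚ hα, (minpoly.monic hα).natDegree_map]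
  constructor
  · intro hγ
    have hsmul : α = m • (α / m) := by rw [zsmul_eq_mul, mul_div_cancel₀ _ hmL]
    have hdeg' : (minpoly ℤ α).natDegree = (minpoly ℤ (α / m)).natDegree := by
      rw [hsmul, IsIntegrallyClosed.minpoly_smul hm hγ, natDegree_scaleRoots, ← hsmul]
    rw [eq_neg_one_pow_mul_coeff_zero_minpoly_int hα hN, hdeg, hsmul,
      IsIntegrallyClosed.coeff_zero_minpoly_smul hm hγ, ← hsmul, hdeg']
    exact Dvd.intro _ (mul_left_comm _ _ _).symm
  · rintro ⟨c, hc⟩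
    rcases eq_or_ne α 0 with rfl | hα0
    · simpa using isIntegral_zero
    have hN0 : (N : L) ≠ 0 := by
      rw [← map_intCast (algebraMap ℚ L), hN]
      exact (_root_.map_ne_zero _).2 (neg_one_pow_mul_coeff_zero_minpoly_ne_zero hαQ hα0)
    have hnorm := isIntegral_pow_natDegree_div_of_isIntegral_conj_div hαQ hconj
    rw [← hN, map_intCast] at hnorm
    refine IsIntegral.of_pow (minpoly.natDegree_pos hαQ) ?_
    have hpow : (α / m) ^ (minpoly ℚ α).natDegree = α ^ (minpoly ℚ α).natDegree / N * c := by
      have hc0 : (c : L) ≠ 0 := fun h => hN0 (by rw [hc]; push_cast; rw [h, mul_zero])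
      rw [hc, div_pow]
      push_cast
      field_simp
    rw [hpow]
    exact hnorm.mul isIntegral_algebraMap

end Rat

theorem stmt19_general (α : ℂ) (hα0 : α ≠ 0) (hαint : IsIntegral ℤ α)
    (hαd : ∀ σ : ℂ ≃+* ℂ, IsIntegral ℤ (σ α / α))
    (d : ℕ) (hd : d = (minpoly ℚ α).natDegree)
    (N : ℤ) (hN : (N : ℚ) = (-1 : ℚ) ^ d * (minpoly ℚ α).coeff 0) :
    (∀ p : ℕ, p.Prime → N.natAbs.factorization p < d) ↔
      (∀ m : ℤ, 2 ≤ m → ¬ ∃ γ : ℂ, IsIntegral ℤ γ ∧ α = (m : ℂ) * γ) := by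
  subst hd
  have hN0 : N ≠ 0 := by
    rw [← Int.cast_ne_zero (α := ℚ), hN]
    exact neg_one_pow_mul_coeff_zero_minpoly_ne_zero hαint.tower_top hα0
  rw [Int.forall_factorization_lt_iff_forall_not_pow_dvd hN0]
  refine forall₂_congr fun m hm => not_congr ?_
  have hm0 : (m : ℂ) ≠ 0 := Int.cast_ne_zero.2 (by omega)
  rw [← isIntegral_div_intCast_iff_pow_natDegree_dvd hαint (fun σ => hαd σ) hN (by omega)]
  constructor
  · exact fun h => ⟨_, h, (mul_div_cancel₀ α hm0).symm⟩
  · rintro ⟨γ, hγ, rfl⟩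
    simpa [hm0] using hγ

/-- Let `α` be a nonzero cyclotomic d-number of degree `d` with norm `N`
(so `(N : ℚ) = (-1)^d · coeff 0` of its minimal polynomial). Then the exponent of
every prime in `N` is `< d` iff no rational integer `m ≥ 2` divides `α` in the ring
of algebraic integers. -/
theorem stmt19 (α : ℂ) (hα0 : α ≠ 0) (hαint : IsIntegral ℤ α)
    (n : ℕ) (hn : 1 ≤ n) (ζ : ℂ) (hζ : IsPrimitiveRoot ζ n) (hαmem : α ∈ ℚ⟮ζ⟯)
    (hαd : ∀ σ : ℂ ≃+* ℂ, IsIntegral ℤ (σ α / α))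
    (d : ℕ) (hd : d = (minpoly ℚ α).natDegree)
    (N : ℤ) (hN : (N : ℚ) = (-1 : ℚ) ^ d * (minpoly ℚ α).coeff 0) :
    (∀ p : ℕ, p.Prime → N.natAbs.factorization p < d) ↔
      (∀ m : ℤ, 2 ≤ m → ¬ ∃ γ : ℂ, IsIntegral ℤ γ ∧ α = (m : ℂ) * γ) :=
  stmt19_general α hα0 hαint hαd d hd N hN
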